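/- arXiv:2604.09267 — 3 statements merged into one kernel-verified Lean document; each statement's English description precedes it below -/
import Mathlib

section
/- Let Q be symmetric positive definite and A, B_1,...,B_m real N×N matrices. Define J*_QCQP as the supremum of z^T Q A z over z in the unit sphere satisfying z^T Q B_i z = 0 for all i (and −∞ if this feasible set is empty). Then J*_QCQP < 0 if and only if for every nonzero z in R^N there exists u in R^m with z^T Q A z + sum_i (z^T Q B_i z) u_i < 0. -/
/-!
Both conditions are homogeneous of degree two in `z`, so only the unit sphere matters. For a fixed
`z`, the affine function `u ↦ z ⬝ᵥ QA z + ∑ (z ⬝ᵥ QBᵢ z) uᵢ` takes a negative value iff it is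
nonconstant or its constant value is negative; so the Lyapunov condition says exactly that
`z ⬝ᵥ QA z < 0` on the feasible set of the QCQP. That set is compact, so the supremum is attained
(or the set is empty and the supremum is `⊥`), and it is negative iff the objective is negative at
every feasible point.
-/

open Matrix

theorem IsCompact.sSup_coe_image_lt_iff {X : Type*} [TopologicalSpace X] {K : Set X}
    (hK : IsCompact K) {f : X → ℝ} (hf : ContinuousOn f K) (y : ℝ) :
    sSup ((fun x => (f x : EReal)) '' K) < y ↔ ∀ x ∈ K, f x < y := by
  rcases K.eq_empty_or_nonempty with rfl | hne
  · simp
  · refine (hK.sSup_lt_iff_of_continuous hne (f := fun x => (f x : EReal))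
      (continuous_coe_real_ereal.comp_continuousOn hf) y).trans ?_
    simp only [EReal.coe_lt_coe_iff]

theorem exists_add_dotProduct_neg_iff {ι : Type*} [Fintype ι] (a : ℝ) (b : ι → ℝ) :
    (∃ u : ι → ℝ, a + b ⬝ᵥ u < 0) ↔ (b = 0 → a < 0) := by
  constructor
  · rintro ⟨u, hu⟩ rfl
    simpa using hu
  · intro h
    by_cases hb : b = 0
    · exact ⟨0, by simpa using h hb⟩
    · have hbb : b ⬝ᵥ b ≠ 0 := fun h0 => hb (dotProduct_self_eq_zero.mp h0)
      refine ⟨((-a - 1) / (b ⬝ᵥ b)) • b, ?_⟩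
      rw [dotProduct_smul, smul_eq_mul, div_mul_cancel₀ _ hbb]
      linarith

section QuadraticForms

variable {ι : Type*} [Fintype ι]

theorem smul_dotProduct_mulVec_smul (M : Matrix ι ι ℝ) (c : ℝ) (z : ι → ℝ) :
    (c • z) ⬝ᵥ (M *ᵥ (c • z)) = c ^ 2 * (z ⬝ᵥ (M *ᵥ z)) := by
  rw [smul_dotProduct, mulVec_smul, dotProduct_smul, smul_eq_mul, smul_eq_mul]
  ring

theorem continuous_dotProduct_mulVec_self (M : Matrix ι ι ℝ) :
    Continuous fun z : ι → ℝ => z ⬝ᵥ (M *ᵥ z) :=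
  continuous_id.dotProduct (continuous_const.matrix_mulVec continuous_id)

theorem isCompact_setOf_dotProduct_self_eq_one :
    IsCompact {z : ι → ℝ | z ⬝ᵥ z = 1} := by
  refine (isCompact_closedBall (0 : ι → ℝ) 1).of_isClosed_subset ?_ fun z hz => ?_
  · exact isClosed_eq (continuous_id.dotProduct continuous_id) continuous_const
  · rw [mem_closedBall_zero_iff, pi_norm_le_iff_of_nonneg zero_le_one]
    intro i
    rw [Real.norm_eq_abs, abs_le_one_iff_mul_self_le_one, ← (hz : z ⬝ᵥ z = 1)]
    exact Finset.single_le_sum (fun k _ => mul_self_nonneg (z k)) (Finset.mem_univ i)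

theorem isCompact_setOf_dotProduct_self_eq_one_and_forall_eq_zero {κ : Type*}
    (P : κ → Matrix ι ι ℝ) :
    IsCompact {z : ι → ℝ | z ⬝ᵥ z = 1 ∧ ∀ i, z ⬝ᵥ (P i *ᵥ z) = 0} := by
  simp only [Set.ofPred_and, Set.ofPred_forall]
  exact isCompact_setOf_dotProduct_self_eq_one.inter_right <|
    isClosed_iInter fun i => isClosed_eq (continuous_dotProduct_mulVec_self (P i)) continuous_const

theorem forall_ne_zero_iff_forall_dotProduct_self_eq_one {κ : Type*}
    (M : Matrix ι ι ℝ) (P : κ → Matrix ι ι ℝ) :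
    (∀ z : ι → ℝ, z ≠ 0 → (∀ i, z ⬝ᵥ (P i *ᵥ z) = 0) → z ⬝ᵥ (M *ᵥ z) < 0) ↔
      ∀ z : ι → ℝ, z ⬝ᵥ z = 1 → (∀ i, z ⬝ᵥ (P i *ᵥ z) = 0) → z ⬝ᵥ (M *ᵥ z) < 0 := by
  constructor
  · exact fun h z hz => h z (by rintro rfl; simp at hz)
  · intro h z hz hP
    have hzz : 0 < z ⬝ᵥ z := (Finset.sum_nonneg fun i _ => mul_self_nonneg (z i)).lt_of_ne
      (Ne.symm (dotProduct_self_eq_zero.not.mpr hz))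
    set c := (√(z ⬝ᵥ z))⁻¹
    have hc : c ^ 2 = (z ⬝ᵥ z)⁻¹ := by rw [inv_pow, Real.sq_sqrt hzz.le]
    have hunit : (c • z) ⬝ᵥ (c • z) = 1 := by
      rw [smul_dotProduct, dotProduct_smul, smul_eq_mul, smul_eq_mul, ← mul_assoc, ← sq, hc,
        inv_mul_cancel₀ hzz.ne']
    have hneg := h (c • z) hunit fun i => by rw [smul_dotProduct_mulVec_smul, hP i, mul_zero]
    rw [smul_dotProduct_mulVec_smul, hc] at hneg
    exact neg_of_mul_neg_right hneg (inv_pos.mpr hzz).le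

end QuadraticForms

theorem stmt_2_general {N m : ℕ} (Q A : Matrix (Fin N) (Fin N) ℝ)
    (B : Fin m → Matrix (Fin N) (Fin N) ℝ)
    (Jqcqp : EReal)
    (hJ : Jqcqp = sSup ((fun z : Fin N → ℝ => ((z ⬝ᵥ ((Q * A) *ᵥ z) : ℝ) : EReal)) ''
      {z : Fin N → ℝ | z ⬝ᵥ z = 1 ∧ ∀ i, z ⬝ᵥ ((Q * B i) *ᵥ z) = 0})) :
    Jqcqp < 0 ↔
      ∀ z : Fin N → ℝ, z ≠ 0 → ∃ u : Fin m → ℝ,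
        z ⬝ᵥ ((Q * A) *ᵥ z) + ∑ i, (z ⬝ᵥ ((Q * B i) *ᵥ z)) * u i < 0 := by
  have hsup := (isCompact_setOf_dotProduct_self_eq_one_and_forall_eq_zero (fun i => Q * B i)
    ).sSup_coe_image_lt_iff (continuous_dotProduct_mulVec_self (Q * A)).continuousOn 0
  have hclf (z : Fin N → ℝ) :
      (∃ u : Fin m → ℝ, z ⬝ᵥ ((Q * A) *ᵥ z) + ∑ i, (z ⬝ᵥ ((Q * B i) *ᵥ z)) * u i < 0) ↔
        ((∀ i, z ⬝ᵥ ((Q * B i) *ᵥ z) = 0) → z ⬝ᵥ ((Q * A) *ᵥ z) < 0) :=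
    (exists_add_dotProduct_neg_iff _ fun i => z ⬝ᵥ ((Q * B i) *ᵥ z)).trans
      (by simp only [funext_iff, Pi.zero_apply])
  rw [hJ, ← EReal.coe_zero, hsup]
  simp only [hclf, forall_ne_zero_iff_forall_dotProduct_self_eq_one, Set.mem_ofPred_eq, and_imp]

/-- negativity of the optimal value of the QCQP (with value -∞ if
infeasible) is equivalent to Q parameterizing a quadratic CLF. -/
theorem stmt_2 {N m : ℕ} (Q A : Matrix (Fin N) (Fin N) ℝ)
    (B : Fin m → Matrix (Fin N) (Fin N) ℝ) (hQ : Q.PosDef)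
    (Jqcqp : EReal)
    (hJ : Jqcqp = sSup ((fun z : Fin N → ℝ => ((z ⬝ᵥ ((Q * A) *ᵥ z) : ℝ) : EReal)) ''
      {z : Fin N → ℝ | z ⬝ᵥ z = 1 ∧ ∀ i, z ⬝ᵥ ((Q * B i) *ᵥ z) = 0})) :
    Jqcqp < 0 ↔
      ∀ z : Fin N → ℝ, z ≠ 0 → ∃ u : Fin m → ℝ,
        z ⬝ᵥ ((Q * A) *ᵥ z) + ∑ i, (z ⬝ᵥ ((Q * B i) *ᵥ z)) * u i < 0 :=
  stmt_2_general Q A B Jqcqp hJ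
end

section
/- Let Q ≻ 0 and A, B_1,...,B_m be real N×N matrices. If the supremum J*_SDP of trace(sym(QA) Z) over PSD matrices Z with trace(Z) = 1 and trace(sym(QB_i) Z) = 0 for all i is negative (or the feasible set is empty), then for every nonzero z in R^N there exists u in R^m with z^T Q A z + sum_i (z^T Q B_i z) u_i < 0, i.e. V_Q(z) = z^T Q z is a control Lyapunov function for the bilinear system. -/
/-!
If some input coefficient `zᵀ Q Bᵢ z` is nonzero, the input `uᵢ` alone can drive the derivative
of `V_Q` below zero. Otherwise the normalised rank-one matrix `z zᵀ / |z|²` is feasible for the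
SDP, and its objective value `zᵀ Q A z / |z|²` is at most `J*_SDP < 0`.
-/

open Matrix

lemma exists_add_dotProduct_neg {ι 𝕜 : Type*} [Fintype ι] [DecidableEq ι] [Field 𝕜]
    [LinearOrder 𝕜] [IsStrictOrderedRing 𝕜] (a : 𝕜) {b : ι → 𝕜} (hb : b ≠ 0) :
    ∃ u : ι → 𝕜, a + b ⬝ᵥ u < 0 := by
  obtain ⟨i, hi⟩ := Function.ne_iff.mp hb
  refine ⟨Pi.single i (-(a + 1) / b i), ?_⟩
  rw [dotProduct_single, mul_div_cancel₀ _ hi]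
  linarith

section SymmetricPart

variable {n R : Type*} [Fintype n]

lemma trace_mul_vecMulVec_self [CommSemiring R] (M : Matrix n n R) (z : n → R) :
    trace (M * vecMulVec z z) = z ⬝ᵥ (M *ᵥ z) := by
  rw [mul_vecMulVec, trace_vecMulVec, dotProduct_comm]

lemma trace_symmPart_mul_vecMulVec_self [Field R] [NeZero (2 : R)] (M : Matrix n n R)
    (z : n → R) : trace (((1 / 2 : R) • (M + Mᵀ)) * vecMulVec z z) = z ⬝ᵥ (M *ᵥ z) := by
  rw [smul_mul, add_mul, trace_smul, trace_add, trace_mul_vecMulVec_self,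
    trace_mul_vecMulVec_self, dotProduct_transpose_mulVec, smul_eq_mul]
  field_simp
  ring

end SymmetricPart

section RankOneProj

variable {n : Type*} [Fintype n]

/-- The orthogonal projection onto the line spanned by `z`. -/
noncomputable def rankOneProj (z : n → ℝ) : Matrix n n ℝ :=
  (z ⬝ᵥ z)⁻¹ • vecMulVec z z

lemma posSemidef_rankOneProj (z : n → ℝ) : (rankOneProj z).PosSemidef := by
  have hz : 0 ≤ z ⬝ᵥ z := Finset.sum_nonneg fun i _ => mul_self_nonneg (z i)
  simpa [rankOneProj] using (posSemidef_vecMulVec_self_star z).smul (inv_nonneg.mpr hz)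

lemma dotProduct_self_pos {z : n → ℝ} (hz : z ≠ 0) : 0 < z ⬝ᵥ z := by
  simpa using dotProduct_self_star_pos_iff.mpr hz

lemma trace_rankOneProj {z : n → ℝ} (hz : z ≠ 0) : trace (rankOneProj z) = 1 := by
  rw [rankOneProj, trace_smul, trace_vecMulVec, smul_eq_mul,
    inv_mul_cancel₀ (dotProduct_self_pos hz).ne']

lemma trace_symmPart_mul_rankOneProj (M : Matrix n n ℝ) (z : n → ℝ) :
    trace (((1 / 2 : ℝ) • (M + Mᵀ)) * rankOneProj z) = (z ⬝ᵥ z)⁻¹ * (z ⬝ᵥ (M *ᵥ z)) := by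
  rw [rankOneProj, Matrix.mul_smul, trace_smul, trace_symmPart_mul_vecMulVec_self, smul_eq_mul]

end RankOneProj

theorem stmt_5_general {N m : ℕ} (Q A : Matrix (Fin N) (Fin N) ℝ)
    (B : Fin m → Matrix (Fin N) (Fin N) ℝ)
    (Jsdp : EReal)
    (hs : Jsdp = sSup ((fun Z : Matrix (Fin N) (Fin N) ℝ =>
        ((Matrix.trace (((1 / 2 : ℝ) • (Q * A + (Q * A)ᵀ)) * Z) : ℝ) : EReal)) ''
      {Z : Matrix (Fin N) (Fin N) ℝ | Z.PosSemidef ∧ Matrix.trace Z = 1 ∧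
        ∀ i, Matrix.trace (((1 / 2 : ℝ) • (Q * B i + (Q * B i)ᵀ)) * Z) = 0}))
    (hneg : Jsdp < 0) :
    ∀ z : Fin N → ℝ, z ≠ 0 → ∃ u : Fin m → ℝ,
      z ⬝ᵥ ((Q * A) *ᵥ z) + ∑ i, (z ⬝ᵥ ((Q * B i) *ᵥ z)) * u i < 0 := by
  intro z hz
  by_cases hb : (fun i => z ⬝ᵥ ((Q * B i) *ᵥ z)) = 0
  · refine ⟨0, ?_⟩
    have hfeas : ∀ i, trace (((1 / 2 : ℝ) • (Q * B i + (Q * B i)ᵀ)) * rankOneProj z) = 0 :=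
      fun i => by rw [trace_symmPart_mul_rankOneProj, congrFun hb i, Pi.zero_apply, mul_zero]
    have hle : (((z ⬝ᵥ z)⁻¹ * (z ⬝ᵥ ((Q * A) *ᵥ z)) : ℝ) : EReal) ≤ Jsdp := hs ▸
      le_sSup ⟨rankOneProj z, ⟨posSemidef_rankOneProj z, trace_rankOneProj hz, hfeas⟩,
        congrArg _ (trace_symmPart_mul_rankOneProj _ z)⟩
    have hobj : (z ⬝ᵥ z)⁻¹ * (z ⬝ᵥ ((Q * A) *ᵥ z)) < 0 :=
      EReal.coe_lt_coe_iff.mp (hle.trans_lt hneg)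
    simpa using neg_of_mul_neg_right hobj (inv_nonneg.mpr (dotProduct_self_pos hz).le)
  · exact exists_add_dotProduct_neg _ hb

/-- negativity of the SDP relaxation value (which is -∞ if the SDP
is infeasible) implies that V_Q is a control Lyapunov function. -/
theorem stmt_5 {N m : ℕ} (Q A : Matrix (Fin N) (Fin N) ℝ)
    (B : Fin m → Matrix (Fin N) (Fin N) ℝ) (hQ : Q.PosDef)
    (Jsdp : EReal)
    (hs : Jsdp = sSup ((fun Z : Matrix (Fin N) (Fin N) ℝ =>
        ((Matrix.trace (((1 / 2 : ℝ) • (Q * A + (Q * A)ᵀ)) * Z) : ℝ) : EReal)) ''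
      {Z : Matrix (Fin N) (Fin N) ℝ | Z.PosSemidef ∧ Matrix.trace Z = 1 ∧
        ∀ i, Matrix.trace (((1 / 2 : ℝ) • (Q * B i + (Q * B i)ᵀ)) * Z) = 0}))
    (hneg : Jsdp < 0) :
    ∀ z : Fin N → ℝ, z ≠ 0 → ∃ u : Fin m → ℝ,
      z ⬝ᵥ ((Q * A) *ᵥ z) + ∑ i, (z ⬝ᵥ ((Q * B i) *ᵥ z)) * u i < 0 :=
  stmt_5_general Q A B Jsdp hs hneg
end

section
/- Suppose the optimal value J*_SDP of the SDP relaxation is attained at a rank-1 matrix Z* (SDP-exactness). Then Q ≻ 0 parameterizes a control Lyapunov function V_Q for the bilinear system if and only if J*_SDP < 0 (with J*_SDP = −∞ if the SDP is infeasible). -/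
/-!
A rank-one SDP solution `Z* = w wᵀ` turns the SDP value into the quadratic program
`sup {zᵀ Q A z : ‖z‖ = 1, zᵀ Q Bᵢ z = 0 ∀ i}`, attained at `w`. Since the input enters affinely,
some `u` makes `zᵀ Q A z + ∑ᵢ (zᵀ Q Bᵢ z) uᵢ` negative exactly when `zᵀ Q A z < 0` or some
`zᵀ Q Bᵢ z ≠ 0`; so `V_Q` is a CLF iff `zᵀ Q A z < 0` on the nonzero common zeros of the `zᵀ Q Bᵢ z`,
i.e. iff the value of that program is negative.
-/

open Matrix

theorem Matrix.exists_eq_vecMulVec_of_rank_eq_one {K : Type*} [Field K] {m n : Type*} [Fintype n]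
    {M : Matrix m n K} (h : M.rank = 1) :
    ∃ v : m → K, v ≠ 0 ∧ ∃ c : n → K, M = vecMulVec v c := by
  classical
  obtain ⟨⟨v, _⟩, hv, hspan⟩ :=
    finrank_eq_one_iff'.mp (h : Module.finrank K (LinearMap.range M.mulVecLin) = 1)
  refine ⟨v, fun h0 => hv (Subtype.ext h0), ?_⟩
  have hcol : ∀ j, ∃ c : K, c • v = M *ᵥ Pi.single j 1 := fun j =>
    (hspan ⟨_, Pi.single j 1, rfl⟩).imp fun _ hc => congrArg Subtype.val hc
  choose c hc using hcol
  refine ⟨c, ext fun i j => ?_⟩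
  simpa [mulVec_single, vecMulVec_apply, mul_comm] using (congrFun (hc j) i).symm

theorem Matrix.PosSemidef.exists_eq_vecMulVec_self_of_rank_eq_one {n : Type*} [Fintype n]
    {M : Matrix n n ℝ} (hM : M.PosSemidef) (h : M.rank = 1) : ∃ w : n → ℝ, M = vecMulVec w w := by
  obtain ⟨v, hv, c, rfl⟩ := exists_eq_vecMulVec_of_rank_eq_one h
  obtain ⟨k, hk : v k ≠ 0⟩ := Function.ne_iff.mp hv
  have hsymm : ∀ i j, v i * c j = v j * c i := fun i j => by
    simpa [vecMulVec_apply] using congrFun (congrFun hM.isHermitian j) i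
  set μ := c k / v k
  have hc : c = μ • v := funext fun j => by
    simp only [Pi.smul_apply, smul_eq_mul, μ]
    rw [div_mul_eq_mul_div, eq_div_iff hk]
    linarith [hsymm k j]
  have hμ : 0 ≤ μ := by
    have := hM.diag_nonneg (i := k)
    rw [hc, vecMulVec_apply, Pi.smul_apply, smul_eq_mul] at this
    nlinarith [mul_self_pos.mpr hk]
  refine ⟨√μ • v, ?_⟩
  rw [hc, vecMulVec_smul, smul_vecMulVec, vecMulVec_smul, smul_smul, Real.mul_self_sqrt hμ]

theorem trace_mul_vecMulVec {R : Type*} [CommSemiring R] {m n : Type*} [Fintype m] [Fintype n]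
    (S : Matrix m n R) (x : n → R) (y : m → R) : trace (S * vecMulVec x y) = y ⬝ᵥ (S *ᵥ x) := by
  rw [trace_mul_comm, vecMulVec_mul, trace_vecMulVec, dotProduct_mulVec, dotProduct_comm]

theorem dotProduct_transpose_mulVec_self {R : Type*} [CommSemiring R] {n : Type*} [Fintype n]
    (M : Matrix n n R) (z : n → R) : z ⬝ᵥ (Mᵀ *ᵥ z) = z ⬝ᵥ (M *ᵥ z) := by
  rw [mulVec_transpose, dotProduct_comm, ← dotProduct_mulVec]

theorem trace_symm_mul_vecMulVec_self {K : Type*} [Field K] [CharZero K] {n : Type*} [Fintype n]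
    (M : Matrix n n K) (z : n → K) :
    trace (((1 / 2 : K) • (M + Mᵀ)) * vecMulVec z z) = z ⬝ᵥ (M *ᵥ z) := by
  rw [trace_mul_vecMulVec, smul_mulVec, add_mulVec, dotProduct_smul, dotProduct_add,
    dotProduct_transpose_mulVec_self, smul_eq_mul]
  ring

theorem exists_add_sum_mul_neg_iff {K : Type*} [Field K] [LinearOrder K] [IsStrictOrderedRing K]
    {ι : Type*} [Fintype ι] (a : K) (b : ι → K) :
    (∃ u : ι → K, a + ∑ i, b i * u i < 0) ↔ ((∀ i, b i = 0) → a < 0) := by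
  classical
  constructor
  · rintro ⟨u, hu⟩ hb
    simpa [hb] using hu
  · intro h
    by_cases hb : ∀ i, b i = 0
    · exact ⟨0, by simpa using h hb⟩
    · obtain ⟨i, hi⟩ := not_forall.mp hb
      refine ⟨Pi.single i ((-a - 1) / b i), ?_⟩
      rw [← dotProduct, dotProduct_single, mul_div_cancel₀ _ hi]
      linarith

theorem stmt_17_general {N m : ℕ} (Q A : Matrix (Fin N) (Fin N) ℝ)
    (B : Fin m → Matrix (Fin N) (Fin N) ℝ)
    (Jsdp : EReal)
    (hs : Jsdp = sSup ((fun Z : Matrix (Fin N) (Fin N) ℝ =>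
        ((Matrix.trace (((1 / 2 : ℝ) • (Q * A + (Q * A)ᵀ)) * Z) : ℝ) : EReal)) ''
      {Z : Matrix (Fin N) (Fin N) ℝ | Z.PosSemidef ∧ Matrix.trace Z = 1 ∧
        ∀ i, Matrix.trace (((1 / 2 : ℝ) • (Q * B i + (Q * B i)ᵀ)) * Z) = 0}))
    (hexact : ∃ Zstar : Matrix (Fin N) (Fin N) ℝ, Zstar.PosSemidef ∧
      Matrix.trace Zstar = 1 ∧
      (∀ i, Matrix.trace (((1 / 2 : ℝ) • (Q * B i + (Q * B i)ᵀ)) * Zstar) = 0) ∧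
      Zstar.rank = 1 ∧
      Jsdp = ((Matrix.trace (((1 / 2 : ℝ) • (Q * A + (Q * A)ᵀ)) * Zstar) : ℝ) : EReal)) :
    (∀ z : Fin N → ℝ, z ≠ 0 → ∃ u : Fin m → ℝ,
        z ⬝ᵥ ((Q * A) *ᵥ z) + ∑ i, (z ⬝ᵥ ((Q * B i) *ᵥ z)) * u i < 0) ↔
      Jsdp < 0 := by
  obtain ⟨_, hZ, hZtr, hZB, hZrank, hJ⟩ := hexact
  obtain ⟨w, rfl⟩ := hZ.exists_eq_vecMulVec_self_of_rank_eq_one hZrank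
  simp only [trace_symm_mul_vecMulVec_self] at hZB hJ
  have hw : w ≠ 0 := by rintro rfl; simp at hZtr
  simp only [exists_add_sum_mul_neg_iff]
  refine ⟨fun hclf => hJ ▸ EReal.coe_lt_coe_iff.mpr (hclf w hw hZB), fun hneg z hz hzB => ?_⟩
  -- the normalized rank-one matrix `z zᵀ / ‖z‖²` is SDP-feasible with value `zᵀ Q A z / ‖z‖²`
  have hzz : 0 < z ⬝ᵥ z := by simpa using dotProduct_self_star_pos_iff.mpr hz
  set Z := (z ⬝ᵥ z)⁻¹ • vecMulVec z z
  have htrace : ∀ M, trace (((1 / 2 : ℝ) • (M + Mᵀ)) * Z) = (z ⬝ᵥ z)⁻¹ * (z ⬝ᵥ (M *ᵥ z)) :=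
    fun M => by rw [mul_smul_comm, trace_smul, trace_symm_mul_vecMulVec_self, smul_eq_mul]
  have hfeas : Z.PosSemidef ∧ trace Z = 1 ∧
      ∀ i, trace (((1 / 2 : ℝ) • (Q * B i + (Q * B i)ᵀ)) * Z) = 0 :=
    ⟨by simpa using (posSemidef_vecMulVec_self_star z).smul (inv_nonneg.mpr hzz.le),
      by simp [Z, trace_smul, hzz.ne'], fun i => by rw [htrace, hzB i, mul_zero]⟩
  rw [hs] at hneg
  have hle := hneg.trans_le' (le_sSup ⟨Z, hfeas, rfl⟩)
  simp only [htrace, EReal.coe_neg'] at hle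
  exact neg_of_mul_neg_right hle (inv_nonneg.mpr hzz.le)

/-- under SDP-exactness (the SDP value is attained at a rank-1
feasible matrix Z*), Q ≻ 0 parameterizes a CLF if and only if J*_SDP < 0. -/
theorem stmt_17 {N m : ℕ} (Q A : Matrix (Fin N) (Fin N) ℝ)
    (B : Fin m → Matrix (Fin N) (Fin N) ℝ) (hQ : Q.PosDef)
    (Jsdp : EReal)
    (hs : Jsdp = sSup ((fun Z : Matrix (Fin N) (Fin N) ℝ =>
        ((Matrix.trace (((1 / 2 : ℝ) • (Q * A + (Q * A)ᵀ)) * Z) : ℝ) : EReal)) ''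
      {Z : Matrix (Fin N) (Fin N) ℝ | Z.PosSemidef ∧ Matrix.trace Z = 1 ∧
        ∀ i, Matrix.trace (((1 / 2 : ℝ) • (Q * B i + (Q * B i)ᵀ)) * Z) = 0}))
    (hexact : ∃ Zstar : Matrix (Fin N) (Fin N) ℝ, Zstar.PosSemidef ∧
      Matrix.trace Zstar = 1 ∧
      (∀ i, Matrix.trace (((1 / 2 : ℝ) • (Q * B i + (Q * B i)ᵀ)) * Zstar) = 0) ∧
      Zstar.rank = 1 ∧
      Jsdp = ((Matrix.trace (((1 / 2 : ℝ) • (Q * A + (Q * A)ᵀ)) * Zstar) : ℝ) : EReal)) :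
    (∀ z : Fin N → ℝ, z ≠ 0 → ∃ u : Fin m → ℝ,
        z ⬝ᵥ ((Q * A) *ᵥ z) + ∑ i, (z ⬝ᵥ ((Q * B i) *ᵥ z)) * u i < 0) ↔
      Jsdp < 0 :=
  stmt_17_general Q A B Jsdp hs hexact
end
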